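/- arXiv:1407.6050 — 2 statements merged into one kernel-verified Lean document; each statement's English description precedes it below -/
import Mathlib

section
/- On ℝ² with a smooth Riemannian metric g, let k̃(x, u, w) = √(det g(x))·ε_{ij}uⁱwʲ/(g_{ab}(x)uᵃuᵇ)^{3/2} be the signed Frenet curvature expressed in the covariant coordinates (x, u, w), defined for u ≠ 0. Then for every l and every (x, u, w) with u ≠ 0: (∂k̃/∂xˡ)(x,u,w) − (∂k̃/∂uⁱ)(x,u,w)·Γⁱ_{lj}(x)uʲ − (∂k̃/∂wⁱ)(x,u,w)·Γⁱ_{lj}(x)wʲ = 0. -/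
noncomputable section
open scoped BigOperators

/-- The partial derivative `∂f/∂xˡ` of a scalar function on `ℝⁿ`. -/
def pd {n : ℕ} (f : (Fin n → ℝ) → ℝ) (l : Fin n) (x : Fin n → ℝ) : ℝ :=
  fderiv ℝ f x (Pi.single l 1)

/-- The Christoffel symbols `Γⁱ_{lj} = ½g^{ik}(∂_l g_{kj} + ∂_j g_{kl} − ∂_k g_{lj})`
of a metric `g` with inverse `ginv`. -/
def christoffel {n : ℕ} (g ginv : (Fin n → ℝ) → Fin n → Fin n → ℝ)
    (i l j : Fin n) (x : Fin n → ℝ) : ℝ :=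
  (1 / 2) * ∑ k, ginv x i k *
    (pd (fun y => g y k j) l x + pd (fun y => g y k l) j x - pd (fun y => g y l j) k x)

/-- The covariant acceleration `wⁱ = u̇ⁱ + Γⁱ_{lj}(x)uˡuʲ`. -/
def covAccel {n : ℕ} (g ginv : (Fin n → ℝ) → Fin n → Fin n → ℝ)
    (x u v : Fin n → ℝ) (i : Fin n) : ℝ :=
  v i + ∑ l, ∑ j, christoffel g ginv i l j x * u l * u j

/-- The Riemannian norm `‖u‖ = (g_{ij}(x)uⁱuʲ)^{1/2}`. -/
def gnorm {n : ℕ} (g : (Fin n → ℝ) → Fin n → Fin n → ℝ) (x u : Fin n → ℝ) : ℝ :=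
  Real.sqrt (∑ i, ∑ j, g x i j * u i * u j)

/-- The second jet `j²x(t) = (x(t), x'(t), x''(t))` of a curve. -/
def jet2 {n : ℕ} (x : ℝ → Fin n → ℝ) (t : ℝ) :
    (Fin n → ℝ) × (Fin n → ℝ) × (Fin n → ℝ) :=
  (x t, deriv x t, deriv (deriv x) t)

/-- The covariant second jet `(x(t), x'(t), w(t))` of a curve,
`w(t)ⁱ = x''ⁱ + Γⁱ_{lj}x'ˡx'ʲ`. -/
def jet2Cov {n : ℕ} (g ginv : (Fin n → ℝ) → Fin n → Fin n → ℝ)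
    (x : ℝ → Fin n → ℝ) (t : ℝ) :
    (Fin n → ℝ) × (Fin n → ℝ) × (Fin n → ℝ) :=
  (x t, deriv x t, fun i => covAccel g ginv (x t) (deriv x t) (deriv (deriv x) t) i)

/-- The `l`-th component of the Euler–Poisson expression
`∂L/∂xˡ − (d/dt)(∂L/∂uˡ) + (d²/dt²)(∂L/∂u̇ˡ)` of a second-order Lagrangian
`L(x,u,u̇)` along the curve `x`. -/
def eulerPoisson {n : ℕ} (L : (Fin n → ℝ) × (Fin n → ℝ) × (Fin n → ℝ) → ℝ)
    (x : ℝ → Fin n → ℝ) (l : Fin n) (t : ℝ) : ℝ :=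
  fderiv ℝ L (jet2 x t) (Pi.single l 1, 0, 0)
    - deriv (fun s => fderiv ℝ L (jet2 x s) (0, Pi.single l 1, 0)) t
    + deriv (deriv (fun s => fderiv ℝ L (jet2 x s) (0, 0, Pi.single l 1))) t

/-- The covariant derivative along the curve `x` of a covector field `α` given along
the curve: `(α)'ᵢ = dαᵢ/dt − Γʲ_{li}x'ˡαⱼ`. -/
def covDeriv {n : ℕ} (g ginv : (Fin n → ℝ) → Fin n → Fin n → ℝ)
    (x : ℝ → Fin n → ℝ) (α : ℝ → Fin n → ℝ) (t : ℝ) (i : Fin n) : ℝ :=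
  deriv (fun s => α s i) t
    - ∑ j, ∑ l, christoffel g ginv j l i (x t) * deriv x t l * α t j

/-- The determinant of a metric on `ℝ²`. -/
def detg (g : (Fin 2 → ℝ) → Fin 2 → Fin 2 → ℝ) (x : Fin 2 → ℝ) : ℝ :=
  g x 0 0 * g x 1 1 - g x 0 1 * g x 1 0

/-- The covector `(εb)ᵢ = ε_{ij}bʲ` with `ε₁₂ = 1` (indices in `{0,1}`). -/
def epsRow (i : Fin 2) (b : Fin 2 → ℝ) : ℝ := if i = 0 then b 1 else -b 0

/-- The signed Frenet curvature `k(x,u,u̇) = √(det g)·ε_{ij}uⁱwʲ/‖u‖³` on `ℝ²`,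
where `wⁱ = u̇ⁱ + Γⁱ_{lj}uˡuʲ`. -/
def frenetK (g ginv : (Fin 2 → ℝ) → Fin 2 → Fin 2 → ℝ)
    (q : (Fin 2 → ℝ) × (Fin 2 → ℝ) × (Fin 2 → ℝ)) : ℝ :=
  Real.sqrt (detg g q.1) *
      (q.2.1 0 * covAccel g ginv q.1 q.2.1 q.2.2 1
        - q.2.1 1 * covAccel g ginv q.1 q.2.1 q.2.2 0)
    / gnorm g q.1 q.2.1 ^ 3

/-- The signed Frenet curvature in the covariant coordinates `(x, u, w)`:
`k̃(x,u,w) = √(det g)·ε_{ij}uⁱwʲ/‖u‖³`. -/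
def frenetKCov (g : (Fin 2 → ℝ) → Fin 2 → Fin 2 → ℝ)
    (q : (Fin 2 → ℝ) × (Fin 2 → ℝ) × (Fin 2 → ℝ)) : ℝ :=
  Real.sqrt (detg g q.1) * (q.2.1 0 * q.2.2 1 - q.2.1 1 * q.2.2 0)
    / gnorm g q.1 q.2.1 ^ 3

set_option maxHeartbeats 4000000 in
/-- for the signed Frenet curvature `k̃(x,u,w)` in covariant coordinates
on `(ℝ², g)` one has, for every `l` and every `(x,u,w)` with `u ≠ 0`,
`∂k̃/∂xˡ − (∂k̃/∂uⁱ)Γⁱ_{lj}uʲ − (∂k̃/∂wⁱ)Γⁱ_{lj}wʲ = 0`. -/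
theorem stmt_10 (g ginv : (Fin 2 → ℝ) → Fin 2 → Fin 2 → ℝ)
    (hg : ∀ i j, ContDiff ℝ (⊤ : ℕ∞) (fun x => g x i j))
    (hsymm : ∀ x i j, g x i j = g x j i)
    (hpos : ∀ (x u : Fin 2 → ℝ), u ≠ 0 → 0 < ∑ i, ∑ j, g x i j * u i * u j)
    (hinv : ∀ x i j, ∑ k, ginv x i k * g x k j = if i = j then (1 : ℝ) else 0) :
    ∀ (l : Fin 2) (x u w : Fin 2 → ℝ), u ≠ 0 →
      fderiv ℝ (fun y => frenetKCov g (y, u, w)) x (Pi.single l 1)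
        - (∑ i, fderiv ℝ (fun u' => frenetKCov g (x, u', w)) u (Pi.single i 1)
            * (∑ j, christoffel g ginv i l j x * u j))
        - (∑ i, fderiv ℝ (fun w' => frenetKCov g (x, u, w')) w (Pi.single i 1)
            * (∑ j, christoffel g ginv i l j x * w j)) = 0 := by
  intro l x u w hu
  have hb : g x 1 0 = g x 0 1 := hsymm x 1 0
  -- positivity of the quadratic form at (x, u)
  have hQpos : 0 < g x 0 0 * u 0 * u 0 + g x 0 1 * u 0 * u 1 +
      (g x 0 1 * u 1 * u 0 + g x 1 1 * u 1 * u 1) := by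
    have h := hpos x u hu
    simp only [Fin.sum_univ_two] at h
    rw [hb] at h
    exact h
  -- positivity of g₀₀
  have ha : 0 < g x 0 0 := by
    have h1 : (Pi.single 0 1 : Fin 2 → ℝ) ≠ 0 := by
      intro h
      have := congrFun h 0
      simp at this
    have h := hpos x (Pi.single 0 1) h1
    simp only [Fin.sum_univ_two, Pi.single_eq_same,
      Pi.single_eq_of_ne (by decide : (1 : Fin 2) ≠ 0), mul_zero, zero_mul, add_zero,
      mul_one] at h
    exact h
  -- positivity of the determinant
  have hdet : 0 < g x 0 0 * g x 1 1 - g x 0 1 * g x 0 1 := by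
    have hv : (![g x 0 1, -(g x 0 0)] : Fin 2 → ℝ) ≠ 0 := by
      intro h
      have := congrFun h 1
      simp at this
      exact ha.ne' this
    have h := hpos x ![g x 0 1, -(g x 0 0)] hv
    simp only [Fin.sum_univ_two, Matrix.cons_val_zero, Matrix.cons_val_one,
      Matrix.head_cons] at h
    rw [hb] at h
    nlinarith [ha, h]
  have hd0 : g x 0 0 * g x 1 1 - g x 0 1 * g x 0 1 ≠ 0 := hdet.ne'
  -- the inverse metric explicitly
  have e00 := hinv x 0 0
  have e01 := hinv x 0 1
  have e10 := hinv x 1 0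
  have e11 := hinv x 1 1
  simp [Fin.sum_univ_two, hb] at e00 e01 e10 e11
  have hG00 : ginv x 0 0 = g x 1 1 / (g x 0 0 * g x 1 1 - g x 0 1 * g x 0 1) := by
    rw [eq_div_iff hd0]
    linear_combination g x 1 1 * e00 - g x 0 1 * e01
  have hG01 : ginv x 0 1 = -(g x 0 1) / (g x 0 0 * g x 1 1 - g x 0 1 * g x 0 1) := by
    rw [eq_div_iff hd0]
    linear_combination -(g x 0 1) * e00 + g x 0 0 * e01
  have hG10 : ginv x 1 0 = -(g x 0 1) / (g x 0 0 * g x 1 1 - g x 0 1 * g x 0 1) := by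
    rw [eq_div_iff hd0]
    linear_combination g x 1 1 * e10 - g x 0 1 * e11
  have hG11 : ginv x 1 1 = g x 0 0 / (g x 0 0 * g x 1 1 - g x 0 1 * g x 0 1) := by
    rw [eq_div_iff hd0]
    linear_combination -(g x 0 1) * e10 + g x 0 0 * e11
  -- derivatives of the metric entries
  have h00 : HasFDerivAt (fun y => g y 0 0) (fderiv ℝ (fun y => g y 0 0) x) x :=
    ((hg 0 0).differentiable (by simp) x).hasFDerivAt
  have h01 : HasFDerivAt (fun y => g y 0 1) (fderiv ℝ (fun y => g y 0 1) x) x :=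
    ((hg 0 1).differentiable (by simp) x).hasFDerivAt
  have h11 : HasFDerivAt (fun y => g y 1 1) (fderiv ℝ (fun y => g y 1 1) x) x :=
    ((hg 1 1).differentiable (by simp) x).hasFDerivAt
  -- the three slice functions in explicit form
  have F1 : (fun y => frenetKCov g (y, u, w)) = fun y =>
      Real.sqrt (g y 0 0 * g y 1 1 - g y 0 1 * g y 0 1) * (u 0 * w 1 - u 1 * w 0) *
        (Real.sqrt (g y 0 0 * u 0 * u 0 + g y 0 1 * u 0 * u 1 +
          (g y 0 1 * u 1 * u 0 + g y 1 1 * u 1 * u 1)) ^ 3)⁻¹ := by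
    funext y
    simp only [frenetKCov, detg, gnorm, Fin.sum_univ_two, div_eq_mul_inv]
    rw [hsymm y 1 0]
  have F2 : (fun u' => frenetKCov g (x, u', w)) = fun u' : Fin 2 → ℝ =>
      Real.sqrt (g x 0 0 * g x 1 1 - g x 0 1 * g x 0 1) * (u' 0 * w 1 - u' 1 * w 0) *
        (Real.sqrt (g x 0 0 * u' 0 * u' 0 + g x 0 1 * u' 0 * u' 1 +
          (g x 0 1 * u' 1 * u' 0 + g x 1 1 * u' 1 * u' 1)) ^ 3)⁻¹ := by
    funext u'
    simp only [frenetKCov, detg, gnorm, Fin.sum_univ_two, div_eq_mul_inv]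
    rw [hsymm x 1 0]
  have F3 : (fun w' => frenetKCov g (x, u, w')) = fun w' : Fin 2 → ℝ =>
      Real.sqrt (g x 0 0 * g x 1 1 - g x 0 1 * g x 0 1) * (u 0 * w' 1 - u 1 * w' 0) *
        (Real.sqrt (g x 0 0 * u 0 * u 0 + g x 0 1 * u 0 * u 1 +
          (g x 0 1 * u 1 * u 0 + g x 1 1 * u 1 * u 1)) ^ 3)⁻¹ := by
    funext w'
    simp only [frenetKCov, detg, gnorm, Fin.sum_univ_two, div_eq_mul_inv]
    rw [hsymm x 1 0]
  -- derivative of the x-slice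
  have hDet := (h00.mul h11).sub (h01.mul h01)
  have hsqD := hDet.sqrt hd0
  have hQf := (((h00.mul_const (u 0)).mul_const (u 0)).add
      ((h01.mul_const (u 0)).mul_const (u 1))).add
    (((h01.mul_const (u 1)).mul_const (u 0)).add ((h11.mul_const (u 1)).mul_const (u 1)))
  have hsqQ := hQf.sqrt hQpos.ne'
  have hcube := (hasDerivAt_pow 3 _).comp_hasFDerivAt x hsqQ
  simp only [Function.comp_def] at hcube
  have hicube := (hasDerivAt_inv (pow_ne_zero 3 (Real.sqrt_ne_zero'.mpr hQpos))).comp_hasFDerivAt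
    x hcube
  simp only [Function.comp_def] at hicube
  have hK1 := (hsqD.mul_const (u 0 * w 1 - u 1 * w 0)).mul hicube
  -- derivative of the u-slice
  have hpr0 : HasFDerivAt (fun v : Fin 2 → ℝ => v 0)
      (ContinuousLinearMap.proj (R := ℝ) (φ := fun _ : Fin 2 => ℝ) 0) u :=
    (ContinuousLinearMap.proj (R := ℝ) (φ := fun _ : Fin 2 => ℝ) 0).hasFDerivAt
  have hpr1 : HasFDerivAt (fun v : Fin 2 → ℝ => v 1)
      (ContinuousLinearMap.proj (R := ℝ) (φ := fun _ : Fin 2 => ℝ) 1) u :=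
    (ContinuousLinearMap.proj (R := ℝ) (φ := fun _ : Fin 2 => ℝ) 1).hasFDerivAt
  have hQf2 := (((hpr0.const_mul (g x 0 0)).mul hpr0).add
      ((hpr0.const_mul (g x 0 1)).mul hpr1)).add
    (((hpr1.const_mul (g x 0 1)).mul hpr0).add ((hpr1.const_mul (g x 1 1)).mul hpr1))
  have hsqQ2 := hQf2.sqrt hQpos.ne'
  have hcube2 := (hasDerivAt_pow 3 _).comp_hasFDerivAt u hsqQ2
  simp only [Function.comp_def] at hcube2
  have hicube2 := (hasDerivAt_inv (pow_ne_zero 3 (Real.sqrt_ne_zero'.mpr hQpos))).comp_hasFDerivAt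
    u hcube2
  simp only [Function.comp_def] at hicube2
  have hK2 := (((hpr0.mul_const (w 1)).sub (hpr1.mul_const (w 0))).const_mul
    (Real.sqrt (g x 0 0 * g x 1 1 - g x 0 1 * g x 0 1))).mul hicube2
  -- derivative of the w-slice
  have hpr0w : HasFDerivAt (fun v : Fin 2 → ℝ => v 0)
      (ContinuousLinearMap.proj (R := ℝ) (φ := fun _ : Fin 2 => ℝ) 0) w :=
    (ContinuousLinearMap.proj (R := ℝ) (φ := fun _ : Fin 2 => ℝ) 0).hasFDerivAt
  have hpr1w : HasFDerivAt (fun v : Fin 2 → ℝ => v 1)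
      (ContinuousLinearMap.proj (R := ℝ) (φ := fun _ : Fin 2 => ℝ) 1) w :=
    (ContinuousLinearMap.proj (R := ℝ) (φ := fun _ : Fin 2 => ℝ) 1).hasFDerivAt
  have hK3 := ((((hpr1w.const_mul (u 0)).sub (hpr0w.const_mul (u 1))).const_mul
    (Real.sqrt (g x 0 0 * g x 1 1 - g x 0 1 * g x 0 1))).mul_const
    ((Real.sqrt (g x 0 0 * u 0 * u 0 + g x 0 1 * u 0 * u 1 +
      (g x 0 1 * u 1 * u 0 + g x 1 1 * u 1 * u 1)) ^ 3)⁻¹))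
  have hr0 : 0 < Real.sqrt (g x 0 0 * g x 1 1 - g x 0 1 * g x 0 1) := Real.sqrt_pos.mpr hdet
  have hs0 : 0 < Real.sqrt (g x 0 0 * u 0 * u 0 + g x 0 1 * u 0 * u 1 +
      (g x 0 1 * u 1 * u 0 + g x 1 1 * u 1 * u 1)) := Real.sqrt_pos.mpr hQpos
  have sa : (Pi.single (0:Fin 2) (1:ℝ) : Fin 2 → ℝ) 1 = 0 := Pi.single_eq_of_ne (show (1:Fin 2) ≠ 0 by decide) 1
  have sb : (Pi.single (1:Fin 2) (1:ℝ) : Fin 2 → ℝ) 0 = 0 := Pi.single_eq_of_ne (show (0:Fin 2) ≠ 1 by decide) 1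
  have hgfun : (fun y => g y 1 0) = (fun y => g y 0 1) := funext fun y => hsymm y 1 0
  have hfix : (1:ℝ) / (2 * Real.sqrt (g x 0 0 * g x 1 1 - g x 0 1 * g x 0 1)) =
      Real.sqrt (g x 0 0 * g x 1 1 - g x 0 1 * g x 0 1) /
        (2 * (g x 0 0 * g x 1 1 - g x 0 1 * g x 0 1)) := by
    rw [div_eq_div_iff (mul_pos two_pos hr0).ne' (mul_pos two_pos hdet).ne']
    linear_combination (-2 : ℝ) * Real.mul_self_sqrt hdet.le
  simp only [Fin.sum_univ_two]
  simp only [Pi.mul_def, Pi.add_def, Pi.sub_def, Pi.mul_apply, Pi.add_apply, Pi.sub_apply] at hK1 hK2 hK3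
  rw [F1, F2, F3, hK1.fderiv, hK2.fderiv, hK3.fderiv]
  simp only [ContinuousLinearMap.add_apply, ContinuousLinearMap.sub_apply,
    ContinuousLinearMap.smul_apply, ContinuousLinearMap.proj_apply, smul_eq_mul,
    Pi.single_eq_same, sa, sb, Nat.cast_ofNat]
  fin_cases l <;>
  · simp only [christoffel, pd, Fin.sum_univ_two, hgfun, hG00, hG01, hG10, hG11,
      Fin.isValue, Fin.zero_eta, Fin.mk_one]
    rw [hfix]
    have hd2 : g x 0 0 * g x 1 1 - g x 0 1 ^ 2 ≠ 0 := by rw [sq]; exact hd0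
    have h1 := hs0.ne'
    have h2 := hr0.ne'
    field_simp
    ring
end
end

section
/- On ℝ² with a smooth Riemannian metric g, let m ∈ ℝ and define the Lagrangian L(x, u, u̇) = k(x, u, u̇) − m‖u‖ for u ≠ 0, where k(x, u, u̇) = √(det g(x))·ε_{ij}uⁱwʲ/‖u‖³, wⁱ = u̇ⁱ + Γⁱ_{lj}(x)uˡuʲ and ‖u‖ = (g_{ij}(x)uⁱuʲ)^{1/2}. Then along every smooth curve x : ℝ → ℝ² with x'(t) ≠ 0 that satisfies the Euler–Poisson equation of L, i.e. (∂L/∂x)(j²x(t)) − (d/dt)(∂L/∂u)(j²x(t)) + (d²/dt²)(∂L/∂u̇)(j²x(t)) = 0 for all t, the Frenet curvature t ↦ k(j²x(t)) is constant; that is, the extremals of the functional ∫(k − m‖u‖)dt are geodesic circles. -/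
noncomputable section
open scoped BigOperators

namespace Stmt11Aux
open scoped ContDiff

lemma contDiff_pd {n : ℕ} {f : (Fin n → ℝ) → ℝ} (hf : ContDiff ℝ (⊤ : ℕ∞) f) (l : Fin n) :
    ContDiff ℝ ∞ (fun x => pd f l x) :=
  (hf.fderiv_right (by simp)).clm_apply contDiff_const

variable {g ginv : (Fin 2 → ℝ) → Fin 2 → Fin 2 → ℝ}

lemma detg_pos (hsymm : ∀ x i j, g x i j = g x j i)
    (hpos : ∀ (x u : Fin 2 → ℝ), u ≠ 0 → 0 < ∑ i, ∑ j, g x i j * u i * u j)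
    (y : Fin 2 → ℝ) : 0 < detg g y := by
  have h00 : 0 < g y 0 0 := by
    have := hpos y (Pi.single 0 1) (by
      intro h; have := congrFun h 0; simp [Pi.single_apply] at this)
    simpa [Fin.sum_univ_two, Pi.single_apply] using this
  have h2 := hpos y (fun i => if i = 0 then -(g y 0 1) else g y 0 0) (by
    intro h; have := congrFun h 1; simp at this; exact h00.ne' this)
  simp [Fin.sum_univ_two] at h2
  have hs := hsymm y 0 1
  simp only [detg]
  nlinarith [h2, h00, hs]

lemma detg_contDiff (hg : ∀ i j, ContDiff ℝ (⊤ : ℕ∞) (fun x => g x i j)) :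
    ContDiff ℝ ∞ (fun y => detg g y) := by
  have h := fun i j => (hg i j).of_le (le_rfl : ∞ ≤ ∞)
  exact ((h 0 0).mul (h 1 1)).sub ((h 0 1).mul (h 1 0))

lemma sqrt_detg_contDiff (hg : ∀ i j, ContDiff ℝ (⊤ : ℕ∞) (fun x => g x i j))
    (hsymm : ∀ x i j, g x i j = g x j i)
    (hpos : ∀ (x u : Fin 2 → ℝ), u ≠ 0 → 0 < ∑ i, ∑ j, g x i j * u i * u j) :
    ContDiff ℝ ∞ (fun y => Real.sqrt (detg g y)) := by
  rw [contDiff_iff_contDiffAt]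
  intro y
  exact (Real.contDiffAt_sqrt (detg_pos hsymm hpos y).ne').comp y
    (detg_contDiff hg).contDiffAt

end Stmt11Aux
namespace Stmt11Aux
open scoped ContDiff
variable {g ginv : (Fin 2 → ℝ) → Fin 2 → Fin 2 → ℝ}

/-- `ginv` entries in closed form. -/
lemma ginv_eq (hsymm : ∀ x i j, g x i j = g x j i)
    (hpos : ∀ (x u : Fin 2 → ℝ), u ≠ 0 → 0 < ∑ i, ∑ j, g x i j * u i * u j)
    (hinv : ∀ x i j, ∑ k, ginv x i k * g x k j = if i = j then (1 : ℝ) else 0)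
    (y : Fin 2 → ℝ) :
    ginv y 0 0 = g y 1 1 / detg g y ∧ ginv y 0 1 = -(g y 0 1) / detg g y ∧
    ginv y 1 0 = -(g y 1 0) / detg g y ∧ ginv y 1 1 = g y 0 0 / detg g y := by
  have hd := (detg_pos hsymm hpos y).ne'
  have e00 := hinv y 0 0; have e01 := hinv y 0 1
  have e10 := hinv y 1 0; have e11 := hinv y 1 1
  simp [Fin.sum_univ_two] at e00 e01 e10 e11
  simp only [detg] at hd ⊢
  refine ⟨?_, ?_, ?_, ?_⟩ <;> rw [eq_div_iff hd]
  · linear_combination (g y 1 1) * e00 - (g y 1 0) * e01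
  · linear_combination (-(g y 0 1)) * e00 + (g y 0 0) * e01
  · linear_combination (g y 1 1) * e10 - (g y 1 0) * e11
  · linear_combination (-(g y 0 1)) * e10 + (g y 0 0) * e11
end Stmt11Aux
namespace Stmt11Aux
open scoped ContDiff
variable {g ginv : (Fin 2 → ℝ) → Fin 2 → Fin 2 → ℝ}

lemma ginv_contDiff (hg : ∀ i j, ContDiff ℝ (⊤ : ℕ∞) (fun x => g x i j))
    (hsymm : ∀ x i j, g x i j = g x j i)
    (hpos : ∀ (x u : Fin 2 → ℝ), u ≠ 0 → 0 < ∑ i, ∑ j, g x i j * u i * u j)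
    (hinv : ∀ x i j, ∑ k, ginv x i k * g x k j = if i = j then (1 : ℝ) else 0)
    (a b : Fin 2) : ContDiff ℝ ∞ (fun y => ginv y a b) := by
  have hd := detg_contDiff hg
  have hdne : ∀ y, detg g y ≠ 0 := fun y => (detg_pos hsymm hpos y).ne'
  have h := ginv_eq hsymm hpos hinv (g := g) (ginv := ginv)
  have hgE := fun i j => (hg i j).of_le (le_rfl : ∞ ≤ ∞)
  have c00 : ContDiff ℝ ∞ (fun y => ginv y 0 0) := by
    have e : (fun y => ginv y 0 0) = fun y => g y 1 1 / detg g y := funext fun y => (h y).1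
    rw [e]; exact (hgE 1 1).div hd hdne
  have c01 : ContDiff ℝ ∞ (fun y => ginv y 0 1) := by
    have e : (fun y => ginv y 0 1) = fun y => -(g y 0 1) / detg g y := funext fun y => (h y).2.1
    rw [e]; exact (hgE 0 1).neg.div hd hdne
  have c10 : ContDiff ℝ ∞ (fun y => ginv y 1 0) := by
    have e : (fun y => ginv y 1 0) = fun y => -(g y 1 0) / detg g y := funext fun y => (h y).2.2.1
    rw [e]; exact (hgE 1 0).neg.div hd hdne
  have c11 : ContDiff ℝ ∞ (fun y => ginv y 1 1) := by
    have e : (fun y => ginv y 1 1) = fun y => g y 0 0 / detg g y := funext fun y => (h y).2.2.2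
    rw [e]; exact (hgE 0 0).div hd hdne
  fin_cases a <;> fin_cases b
  · exact c00
  · exact c01
  · exact c10
  · exact c11

lemma christoffel_contDiff (hg : ∀ i j, ContDiff ℝ (⊤ : ℕ∞) (fun x => g x i j))
    (hsymm : ∀ x i j, g x i j = g x j i)
    (hpos : ∀ (x u : Fin 2 → ℝ), u ≠ 0 → 0 < ∑ i, ∑ j, g x i j * u i * u j)
    (hinv : ∀ x i j, ∑ k, ginv x i k * g x k j = if i = j then (1 : ℝ) else 0)
    (i l j : Fin 2) : ContDiff ℝ ∞ (fun y => christoffel g ginv i l j y) := by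
  have hginv := ginv_contDiff hg hsymm hpos hinv (ginv := ginv)
  have hpd : ∀ (a b c : Fin 2), ContDiff ℝ ∞ (fun y => pd (fun z => g z a b) c y) :=
    fun a b c => contDiff_pd (hg a b) c
  simp only [christoffel, Fin.sum_univ_two]
  exact contDiff_const.mul
    (((hginv i 0).mul (((hpd 0 j l).add (hpd 0 l j)).sub (hpd l j 0))).add
     ((hginv i 1).mul (((hpd 1 j l).add (hpd 1 l j)).sub (hpd l j 1))))

abbrev J2 := (Fin 2 → ℝ) × (Fin 2 → ℝ) × (Fin 2 → ℝ)

lemma proj_x : ContDiff ℝ ∞ (fun q : J2 => q.1) := contDiff_fst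
lemma proj_u (i : Fin 2) : ContDiff ℝ ∞ (fun q : J2 => q.2.1 i) :=
  contDiff_pi.1 (contDiff_fst.comp contDiff_snd) i
lemma proj_v (i : Fin 2) : ContDiff ℝ ∞ (fun q : J2 => q.2.2 i) :=
  contDiff_pi.1 (contDiff_snd.comp contDiff_snd) i

lemma covAccel_contDiff (hg : ∀ i j, ContDiff ℝ (⊤ : ℕ∞) (fun x => g x i j))
    (hsymm : ∀ x i j, g x i j = g x j i)
    (hpos : ∀ (x u : Fin 2 → ℝ), u ≠ 0 → 0 < ∑ i, ∑ j, g x i j * u i * u j)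
    (hinv : ∀ x i j, ∑ k, ginv x i k * g x k j = if i = j then (1 : ℝ) else 0)
    (i : Fin 2) : ContDiff ℝ ∞ (fun q : J2 => covAccel g ginv q.1 q.2.1 q.2.2 i) := by
  have hΓ : ∀ a b, ContDiff ℝ ∞ (fun q : J2 => christoffel g ginv i a b q.1) :=
    fun a b => (christoffel_contDiff hg hsymm hpos hinv i a b).comp proj_x
  simp only [covAccel, Fin.sum_univ_two]
  exact (proj_v i).add
    (((((hΓ 0 0).mul (proj_u 0)).mul (proj_u 0)).add
      (((hΓ 0 1).mul (proj_u 0)).mul (proj_u 1))).add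
     ((((hΓ 1 0).mul (proj_u 1)).mul (proj_u 0)).add
      (((hΓ 1 1).mul (proj_u 1)).mul (proj_u 1))))

lemma Q_contDiff (hg : ∀ i j, ContDiff ℝ (⊤ : ℕ∞) (fun x => g x i j)) :
    ContDiff ℝ ∞ (fun q : J2 => ∑ i, ∑ j, g q.1 i j * q.2.1 i * q.2.1 j) := by
  have hG : ∀ a b, ContDiff ℝ ∞ (fun q : J2 => g q.1 a b) :=
    fun a b => ((hg a b).of_le (le_rfl : ∞ ≤ ∞)).comp proj_x
  simp only [Fin.sum_univ_two]
  exact ((((hG 0 0).mul (proj_u 0)).mul (proj_u 0)).add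
      (((hG 0 1).mul (proj_u 0)).mul (proj_u 1))).add
    ((((hG 1 0).mul (proj_u 1)).mul (proj_u 0)).add
      (((hG 1 1).mul (proj_u 1)).mul (proj_u 1)))

lemma gnorm_pos (hpos : ∀ (x u : Fin 2 → ℝ), u ≠ 0 → 0 < ∑ i, ∑ j, g x i j * u i * u j)
    {y u : Fin 2 → ℝ} (hu : u ≠ 0) : 0 < gnorm g y u :=
  Real.sqrt_pos.2 (hpos y u hu)

lemma gnorm_contDiffAt (hg : ∀ i j, ContDiff ℝ (⊤ : ℕ∞) (fun x => g x i j))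
    (hpos : ∀ (x u : Fin 2 → ℝ), u ≠ 0 → 0 < ∑ i, ∑ j, g x i j * u i * u j)
    {q : J2} (hq : q.2.1 ≠ 0) :
    ContDiffAt ℝ ∞ (fun q : J2 => gnorm g q.1 q.2.1) q := by
  have : (fun q : J2 => gnorm g q.1 q.2.1)
      = fun q : J2 => Real.sqrt (∑ i, ∑ j, g q.1 i j * q.2.1 i * q.2.1 j) := rfl
  rw [this]
  exact (Real.contDiffAt_sqrt (hpos q.1 q.2.1 hq).ne').comp q (Q_contDiff hg).contDiffAt

lemma L_contDiffAt (hg : ∀ i j, ContDiff ℝ (⊤ : ℕ∞) (fun x => g x i j))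
    (hsymm : ∀ x i j, g x i j = g x j i)
    (hpos : ∀ (x u : Fin 2 → ℝ), u ≠ 0 → 0 < ∑ i, ∑ j, g x i j * u i * u j)
    (hinv : ∀ x i j, ∑ k, ginv x i k * g x k j = if i = j then (1 : ℝ) else 0)
    (m : ℝ) {q : J2} (hq : q.2.1 ≠ 0) :
    ContDiffAt ℝ ∞ (fun q : J2 => frenetK g ginv q - m * gnorm g q.1 q.2.1) q := by
  have hgn := gnorm_contDiffAt hg hpos hq
  have hgnne : gnorm g q.1 q.2.1 ^ 3 ≠ 0 := pow_ne_zero 3 (gnorm_pos hpos hq).ne'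
  have hnum : ContDiffAt ℝ ∞ (fun q : J2 =>
      Real.sqrt (detg g q.1) * (q.2.1 0 * covAccel g ginv q.1 q.2.1 q.2.2 1
        - q.2.1 1 * covAccel g ginv q.1 q.2.1 q.2.2 0)) q :=
    (((sqrt_detg_contDiff hg hsymm hpos).comp proj_x).mul
      (((proj_u 0).mul (covAccel_contDiff hg hsymm hpos hinv 1)).sub
       ((proj_u 1).mul (covAccel_contDiff hg hsymm hpos hinv 0)))).contDiffAt
  have hK : ContDiffAt ℝ ∞ (fun q : J2 => frenetK g ginv q) q := by
    simp only [frenetK]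
    exact hnum.div (hgn.pow 3) hgnne
  exact hK.sub (contDiffAt_const.mul hgn)

end Stmt11Aux
namespace Stmt11Aux
open scoped ContDiff
variable {g ginv : (Fin 2 → ℝ) → Fin 2 → Fin 2 → ℝ}

lemma covAccel_shift (x u v : Fin 2 → ℝ) (μ : ℝ) (i : Fin 2) :
    covAccel g ginv x u (v + μ • u) i = covAccel g ginv x u v i + μ * u i := by
  simp [covAccel]; ring

lemma covAccel_scale (x u v : Fin 2 → ℝ) (lam : ℝ) (i : Fin 2) :
    covAccel g ginv x (lam • u) ((lam ^ 2) • v) i = lam ^ 2 * covAccel g ginv x u v i := by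
  simp [covAccel, Fin.sum_univ_two]; ring

lemma gnorm_scale (x u : Fin 2 → ℝ) {lam : ℝ} (hlam : 0 ≤ lam) :
    gnorm g x (lam • u) = lam * gnorm g x u := by
  have h : (∑ i, ∑ j, g x i j * (lam • u) i * (lam • u) j)
      = lam ^ 2 * ∑ i, ∑ j, g x i j * u i * u j := by
    simp [Fin.sum_univ_two]; ring
  simp only [gnorm, h]
  rw [Real.sqrt_mul (sq_nonneg lam), Real.sqrt_sq hlam]

lemma frenetK_shift (q : J2) (μ : ℝ) :
    frenetK g ginv (q.1, q.2.1, q.2.2 + μ • q.2.1) = frenetK g ginv q := by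
  obtain ⟨y, u, v⟩ := q
  simp only [frenetK, covAccel_shift]
  ring_nf

lemma frenetK_scale (q : J2) {lam : ℝ} (hlam : 0 < lam) (hu : q.2.1 ≠ 0)
    (hpos : ∀ (x u : Fin 2 → ℝ), u ≠ 0 → 0 < ∑ i, ∑ j, g x i j * u i * u j) :
    frenetK g ginv (q.1, lam • q.2.1, (lam ^ 2) • q.2.2) = frenetK g ginv q := by
  obtain ⟨y, u, v⟩ := q
  have hgn : 0 < gnorm g y u := gnorm_pos hpos hu
  simp only [frenetK, covAccel_scale, gnorm_scale y u hlam.le, Pi.smul_apply, smul_eq_mul]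
  rw [mul_pow]
  field_simp
end Stmt11Aux
namespace Stmt11Aux
open scoped ContDiff
variable {g ginv : (Fin 2 → ℝ) → Fin 2 → Fin 2 → ℝ}

/-- Identity (A): the fderiv of `L` in direction `(0,0,u)` vanishes. -/
lemma identA (hg : ∀ i j, ContDiff ℝ (⊤ : ℕ∞) (fun x => g x i j))
    (hsymm : ∀ x i j, g x i j = g x j i)
    (hpos : ∀ (x u : Fin 2 → ℝ), u ≠ 0 → 0 < ∑ i, ∑ j, g x i j * u i * u j)
    (hinv : ∀ x i j, ∑ k, ginv x i k * g x k j = if i = j then (1 : ℝ) else 0)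
    (m : ℝ) {q : J2} (hq : q.2.1 ≠ 0) :
    fderiv ℝ (fun q : J2 => frenetK g ginv q - m * gnorm g q.1 q.2.1) q
      ((0 : Fin 2 → ℝ), (0 : Fin 2 → ℝ), q.2.1) = 0 := by
  set L := fun q : J2 => frenetK g ginv q - m * gnorm g q.1 q.2.1 with hL
  have hdiff : DifferentiableAt ℝ L q :=
    (L_contDiffAt hg hsymm hpos hinv m hq).differentiableAt
      (by simp)
  set γ := fun μ : ℝ => (q.1, q.2.1, q.2.2 + μ • q.2.1) with hγdef
  have h0 : γ 0 = q := by simp [hγdef]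
  have hγ : HasDerivAt γ ((0 : Fin 2 → ℝ), (0 : Fin 2 → ℝ), q.2.1) 0 := by
    refine HasDerivAt.prodMk (hasDerivAt_const _ _) (HasDerivAt.prodMk (hasDerivAt_const _ _) ?_)
    have h1 : HasDerivAt (fun μ : ℝ => μ • q.2.1) ((1 : ℝ) • q.2.1) 0 :=
      (hasDerivAt_id (0:ℝ)).smul_const q.2.1
    simpa using h1.const_add q.2.2
  have hcomp : HasDerivAt (fun μ => L (γ μ))
      (fderiv ℝ L q ((0 : Fin 2 → ℝ), (0 : Fin 2 → ℝ), q.2.1)) 0 := by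
    have hF : HasFDerivAt L (fderiv ℝ L q) (γ 0) := by rw [h0]; exact hdiff.hasFDerivAt
    exact hF.comp_hasDerivAt 0 hγ
  have hconst : (fun μ => L (γ μ)) = fun _ => L q := by
    funext μ
    have := frenetK_shift (g := g) (ginv := ginv) q μ
    simp only [hL, hγdef, this]
  rw [hconst] at hcomp
  exact hcomp.unique (hasDerivAt_const 0 (L q))

/-- Identity (B): the fderiv of `L` in direction `(0,u,2v)` is `-m‖u‖`. -/
lemma identB (hg : ∀ i j, ContDiff ℝ (⊤ : ℕ∞) (fun x => g x i j))
    (hsymm : ∀ x i j, g x i j = g x j i)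
    (hpos : ∀ (x u : Fin 2 → ℝ), u ≠ 0 → 0 < ∑ i, ∑ j, g x i j * u i * u j)
    (hinv : ∀ x i j, ∑ k, ginv x i k * g x k j = if i = j then (1 : ℝ) else 0)
    (m : ℝ) {q : J2} (hq : q.2.1 ≠ 0) :
    fderiv ℝ (fun q : J2 => frenetK g ginv q - m * gnorm g q.1 q.2.1) q
      ((0 : Fin 2 → ℝ), q.2.1, (2 : ℝ) • q.2.2) = -(m * gnorm g q.1 q.2.1) := by
  set L := fun q : J2 => frenetK g ginv q - m * gnorm g q.1 q.2.1 with hL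
  have hdiff : DifferentiableAt ℝ L q :=
    (L_contDiffAt hg hsymm hpos hinv m hq).differentiableAt
      (by simp)
  set γ := fun lam : ℝ => (q.1, lam • q.2.1, (lam ^ 2) • q.2.2) with hγdef
  have h0 : γ 1 = q := by simp [hγdef]
  have hγ : HasDerivAt γ ((0 : Fin 2 → ℝ), q.2.1, (2 : ℝ) • q.2.2) 1 := by
    refine HasDerivAt.prodMk (hasDerivAt_const _ _) (HasDerivAt.prodMk ?_ ?_)
    · simpa using (hasDerivAt_id (1:ℝ)).smul_const q.2.1
    · have h1 : HasDerivAt (fun lam : ℝ => lam ^ 2) 2 1 := by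
        simpa using hasDerivAt_pow 2 (1 : ℝ)
      simpa using h1.smul_const q.2.2
  have hcomp : HasDerivAt (fun lam => L (γ lam))
      (fderiv ℝ L q ((0 : Fin 2 → ℝ), q.2.1, (2 : ℝ) • q.2.2)) 1 := by
    have hF : HasFDerivAt L (fderiv ℝ L q) (γ 1) := by rw [h0]; exact hdiff.hasFDerivAt
    exact hF.comp_hasDerivAt 1 hγ
  have heq : (fun lam => L (γ lam)) =ᶠ[nhds 1]
      fun lam => frenetK g ginv q - m * (lam * gnorm g q.1 q.2.1) := by
    filter_upwards [isOpen_Ioi.mem_nhds (by norm_num : (1:ℝ) ∈ Set.Ioi (0:ℝ))] with lam hlam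
    have hsc := frenetK_scale (g := g) (ginv := ginv) q (lam := lam) hlam hq hpos
    simp only [hL, hγdef]
    rw [hsc, gnorm_scale _ _ (le_of_lt hlam)]
  have hφ : HasDerivAt (fun lam : ℝ => frenetK g ginv q - m * (lam * gnorm g q.1 q.2.1))
      (-(m * gnorm g q.1 q.2.1)) 1 := by
    have h1 : HasDerivAt (fun lam : ℝ => lam * gnorm g q.1 q.2.1) (gnorm g q.1 q.2.1) 1 := by
      simpa using (hasDerivAt_id (1:ℝ)).mul_const (gnorm g q.1 q.2.1)
    simpa using (h1.const_mul m).const_sub (frenetK g ginv q)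
  have hcomp' : HasDerivAt (fun lam => frenetK g ginv q - m * (lam * gnorm g q.1 q.2.1))
      (fderiv ℝ L q ((0 : Fin 2 → ℝ), q.2.1, (2 : ℝ) • q.2.2)) 1 :=
    hcomp.congr_of_eventuallyEq heq.symm
  exact hcomp'.unique hφ
end Stmt11Aux
namespace Stmt11Aux
open scoped ContDiff

lemma hasDerivAt_coord {F : ℝ → (Fin 2 → ℝ)} {F' : Fin 2 → ℝ} {t : ℝ}
    (hF : HasDerivAt F F' t) (l : Fin 2) : HasDerivAt (fun s => F s l) (F' l) t := by
  exact
    (ContinuousLinearMap.proj (R := ℝ) (φ := fun _ : Fin 2 => ℝ) l).hasFDerivAt.comp_hasDerivAt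
      t hF

lemma pair_decomp (w : Fin 2 → ℝ) :
    w = w 0 • (Pi.single 0 1 : Fin 2 → ℝ) + w 1 • (Pi.single 1 1 : Fin 2 → ℝ) := by
  funext i; fin_cases i <;> simp [Pi.single_apply]

lemma clm_fst (φ : J2 →L[ℝ] ℝ) (w : Fin 2 → ℝ) :
    φ (w, 0, 0) = w 0 * φ (Pi.single 0 1, 0, 0) + w 1 * φ (Pi.single 1 1, 0, 0) := by
  have hw : ((w, 0, 0) : J2) = w 0 • ((Pi.single 0 1 : Fin 2 → ℝ), (0 : Fin 2 → ℝ), (0 : Fin 2 → ℝ))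
      + w 1 • ((Pi.single 1 1 : Fin 2 → ℝ), 0, 0) := by
    refine Prod.ext ?_ (Prod.ext ?_ ?_) <;> simp
    exact pair_decomp w
  rw [hw, map_add, map_smul, map_smul]; simp

lemma clm_mid (φ : J2 →L[ℝ] ℝ) (w : Fin 2 → ℝ) :
    φ (0, w, 0) = w 0 * φ (0, Pi.single 0 1, 0) + w 1 * φ (0, Pi.single 1 1, 0) := by
  have hw : ((0, w, 0) : J2) = w 0 • ((0 : Fin 2 → ℝ), (Pi.single 0 1 : Fin 2 → ℝ), (0 : Fin 2 → ℝ))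
      + w 1 • ((0 : Fin 2 → ℝ), (Pi.single 1 1 : Fin 2 → ℝ), 0) := by
    refine Prod.ext ?_ (Prod.ext ?_ ?_) <;> simp
    exact pair_decomp w
  rw [hw, map_add, map_smul, map_smul]; simp

lemma clm_last (φ : J2 →L[ℝ] ℝ) (w : Fin 2 → ℝ) :
    φ (0, 0, w) = w 0 * φ (0, 0, Pi.single 0 1) + w 1 * φ (0, 0, Pi.single 1 1) := by
  have hw : ((0, 0, w) : J2) = w 0 • ((0 : Fin 2 → ℝ), (0 : Fin 2 → ℝ), (Pi.single 0 1 : Fin 2 → ℝ))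
      + w 1 • ((0 : Fin 2 → ℝ), (0 : Fin 2 → ℝ), (Pi.single 1 1 : Fin 2 → ℝ)) := by
    refine Prod.ext ?_ (Prod.ext ?_ ?_) <;> simp
    exact pair_decomp w
  rw [hw, map_add, map_smul, map_smul]; simp

lemma clm_split (φ : J2 →L[ℝ] ℝ) (a b c : Fin 2 → ℝ) :
    φ (a, b, c) = φ (a, 0, 0) + φ (0, b, 0) + φ (0, 0, c) := by
  have : ((a, b, c) : J2) = (a, 0, 0) + (0, b, 0) + (0, 0, c) := by
    refine Prod.ext ?_ (Prod.ext ?_ ?_) <;> simp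
  rw [this, map_add, map_add]

lemma clm_two (φ : J2 →L[ℝ] ℝ) (w : Fin 2 → ℝ) :
    φ (0, 0, (2 : ℝ) • w) = 2 * φ (0, 0, w) := by
  have : ((0, 0, (2 : ℝ) • w) : J2) = (2 : ℝ) • ((0, 0, w) : J2) := by
    refine Prod.ext ?_ (Prod.ext ?_ ?_) <;> simp
  rw [this, map_smul]; simp

end Stmt11Aux
namespace Stmt11Aux
open scoped ContDiff

/-- The key off-shell identity: for a Lagrangian `L` with the two homogeneity
properties (A) and (B), the contraction of the Euler–Poisson expression with the
velocity equals the time derivative of `L∘j² + N`. -/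
lemma key (L : J2 → ℝ) (x : ℝ → Fin 2 → ℝ) (N : ℝ → ℝ) (t : ℝ)
    (hL : ∀ s : ℝ, ContDiffAt ℝ ∞ L (jet2 x s))
    (hx1 : ContDiff ℝ ∞ x)
    (hN : ContDiff ℝ ∞ N)
    (hIA : ∀ s : ℝ, fderiv ℝ L (jet2 x s) (0, 0, deriv x s) = 0)
    (hIB : ∀ s : ℝ, fderiv ℝ L (jet2 x s) (0, deriv x s, (2 : ℝ) • deriv (deriv x) s)
      = -(N s)) :
    deriv (fun s => L (jet2 x s) + N s) t
      = deriv x t 0 * eulerPoisson L x 0 t + deriv x t 1 * eulerPoisson L x 1 t := by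
  have hone : (∞ : WithTop ℕ∞) ≠ 0 := by simp
  have hu1 : ContDiff ℝ ∞ (deriv x) := (contDiff_infty_iff_deriv.mp hx1).2
  have hv1 : ContDiff ℝ ∞ (deriv (deriv x)) := (contDiff_infty_iff_deriv.mp hu1).2
  have hjet : ContDiff ℝ ∞ (jet2 x) := by
    have h : jet2 x = fun s => (x s, deriv x s, deriv (deriv x) s) := rfl
    rw [h]; exact hx1.prodMk (hu1.prodMk hv1)
  have hPhi : ContDiff ℝ ∞ (fun s => fderiv ℝ L (jet2 x s)) := by
    rw [contDiff_iff_contDiffAt]; intro s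
    refine ContDiffAt.fderiv (n := ∞) (f := fun (_ : ℝ) q => L q) (g := jet2 x) ?_ hjet.contDiffAt ?_
    · exact (hL s).comp (s, jet2 x s) contDiffAt_snd
    · exact_mod_cast le_top
  -- coordinate has-deriv facts
  have hxd : ∀ s : ℝ, HasDerivAt x (deriv x s) s :=
    fun s => (hx1.differentiable hone s).hasDerivAt
  have hud : ∀ s : ℝ, HasDerivAt (deriv x) (deriv (deriv x) s) s :=
    fun s => (hu1.differentiable hone s).hasDerivAt
  have hvd : ∀ s : ℝ, HasDerivAt (deriv (deriv x)) (deriv (deriv (deriv x)) s) s :=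
    fun s => (hv1.differentiable hone s).hasDerivAt
  have hucd : ∀ (s : ℝ) (l : Fin 2),
      HasDerivAt (fun s' => deriv x s' l) (deriv (deriv x) s l) s :=
    fun s l => hasDerivAt_coord (hud s) l
  have hvcd : ∀ (s : ℝ) (l : Fin 2),
      HasDerivAt (fun s' => deriv (deriv x) s' l) (deriv (deriv (deriv x)) s l) s :=
    fun s l => hasDerivAt_coord (hvd s) l
  -- b and c functions
  have hbC : ∀ l : Fin 2,
      ContDiff ℝ ∞ (fun s => fderiv ℝ L (jet2 x s) (0, Pi.single l 1, 0)) :=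
    fun l => hPhi.clm_apply contDiff_const
  have hcC : ∀ l : Fin 2,
      ContDiff ℝ ∞ (fun s => fderiv ℝ L (jet2 x s) (0, 0, Pi.single l 1)) :=
    fun l => hPhi.clm_apply contDiff_const
  have hc'C : ∀ l : Fin 2,
      ContDiff ℝ ∞ (deriv (fun s => fderiv ℝ L (jet2 x s) (0, 0, Pi.single l 1))) :=
    fun l => (contDiff_infty_iff_deriv.mp (hcC l)).2
  have hbd : ∀ (l : Fin 2) (s : ℝ),
      HasDerivAt (fun s' => fderiv ℝ L (jet2 x s') (0, Pi.single l 1, 0))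
        (deriv (fun s' => fderiv ℝ L (jet2 x s') (0, Pi.single l 1, 0)) s) s :=
    fun l s => ((hbC l).differentiable hone s).hasDerivAt
  have hcd : ∀ (l : Fin 2) (s : ℝ),
      HasDerivAt (fun s' => fderiv ℝ L (jet2 x s') (0, 0, Pi.single l 1))
        (deriv (fun s' => fderiv ℝ L (jet2 x s') (0, 0, Pi.single l 1)) s) s :=
    fun l s => ((hcC l).differentiable hone s).hasDerivAt
  have hc'd : ∀ (l : Fin 2) (s : ℝ),
      HasDerivAt (deriv (fun s' => fderiv ℝ L (jet2 x s') (0, 0, Pi.single l 1)))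
        (deriv (deriv (fun s' => fderiv ℝ L (jet2 x s') (0, 0, Pi.single l 1))) s) s :=
    fun l s => ((hc'C l).differentiable hone s).hasDerivAt
  -- decomposed identity (A)
  have hIA' : ∀ s : ℝ,
      deriv x s 0 * fderiv ℝ L (jet2 x s) (0, 0, Pi.single 0 1)
        + deriv x s 1 * fderiv ℝ L (jet2 x s) (0, 0, Pi.single 1 1) = 0 := by
    intro s
    have h := hIA s
    rwa [clm_last] at h
  -- decomposed identity (B)
  have hIB' : ∀ s : ℝ,
      (deriv x s 0 * fderiv ℝ L (jet2 x s) (0, Pi.single 0 1, 0)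
        + deriv x s 1 * fderiv ℝ L (jet2 x s) (0, Pi.single 1 1, 0))
      + 2 * (deriv (deriv x) s 0 * fderiv ℝ L (jet2 x s) (0, 0, Pi.single 0 1)
        + deriv (deriv x) s 1 * fderiv ℝ L (jet2 x s) (0, 0, Pi.single 1 1)) = -(N s) := by
    intro s
    have h := hIB s
    rw [clm_split] at h
    have hz : fderiv ℝ L (jet2 x s) ((0 : Fin 2 → ℝ), (0 : Fin 2 → ℝ), (0 : Fin 2 → ℝ)) = 0 := by
      have h0 : ((0, 0, 0) : J2) = 0 := rfl
      rw [h0, map_zero]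
    rw [hz, clm_two, clm_mid, clm_last] at h
    linarith [h]
  -- first derivative of identity (A)
  have hQ1 : ∀ s : ℝ,
      deriv (deriv x) s 0 * fderiv ℝ L (jet2 x s) (0, 0, Pi.single 0 1)
        + deriv x s 0 * deriv (fun s' => fderiv ℝ L (jet2 x s') (0, 0, Pi.single 0 1)) s
        + deriv (deriv x) s 1 * fderiv ℝ L (jet2 x s) (0, 0, Pi.single 1 1)
        + deriv x s 1 * deriv (fun s' => fderiv ℝ L (jet2 x s') (0, 0, Pi.single 1 1)) s
        = 0 := by
    intro s
    have h1 := ((hucd s 0).mul (hcd 0 s)).add ((hucd s 1).mul (hcd 1 s))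
    have h2 : (fun s' => deriv x s' 0 * fderiv ℝ L (jet2 x s') (0, 0, Pi.single 0 1)
        + deriv x s' 1 * fderiv ℝ L (jet2 x s') (0, 0, Pi.single 1 1)) = fun _ => (0 : ℝ) :=
      funext hIA'
    have h1 := h1.congr_of_eventuallyEq (Filter.EventuallyEq.of_eq h2.symm)
    have h3 := h1.unique (hasDerivAt_const s 0)
    linarith [h3]
  -- second derivative of identity (A), at t
  have hQ2 :
      deriv (deriv (deriv x)) t 0 * fderiv ℝ L (jet2 x t) (0, 0, Pi.single 0 1)
        + 2 * (deriv (deriv x) t 0 * deriv (fun s' => fderiv ℝ L (jet2 x s') (0, 0, Pi.single 0 1)) t)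
        + deriv x t 0 * deriv (deriv (fun s' => fderiv ℝ L (jet2 x s') (0, 0, Pi.single 0 1))) t
        + deriv (deriv (deriv x)) t 1 * fderiv ℝ L (jet2 x t) (0, 0, Pi.single 1 1)
        + 2 * (deriv (deriv x) t 1 * deriv (fun s' => fderiv ℝ L (jet2 x s') (0, 0, Pi.single 1 1)) t)
        + deriv x t 1 * deriv (deriv (fun s' => fderiv ℝ L (jet2 x s') (0, 0, Pi.single 1 1))) t
        = 0 := by
    have h1 := ((((hvcd t 0).mul (hcd 0 t)).add ((hucd t 0).mul (hc'd 0 t))).add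
      (((hvcd t 1).mul (hcd 1 t)).add ((hucd t 1).mul (hc'd 1 t))))
    have h2 : (fun s => (deriv (deriv x) s 0 * fderiv ℝ L (jet2 x s) (0, 0, Pi.single 0 1)
          + deriv x s 0 * deriv (fun s' => fderiv ℝ L (jet2 x s') (0, 0, Pi.single 0 1)) s)
        + (deriv (deriv x) s 1 * fderiv ℝ L (jet2 x s) (0, 0, Pi.single 1 1)
          + deriv x s 1 * deriv (fun s' => fderiv ℝ L (jet2 x s') (0, 0, Pi.single 1 1)) s))
        = fun _ => (0 : ℝ) := by
      funext s
      have := hQ1 s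
      linarith [this]
    have h1 := h1.congr_of_eventuallyEq (Filter.EventuallyEq.of_eq h2.symm)
    have h3 := h1.unique (hasDerivAt_const t 0)
    linarith [h3]
  -- derivative of identity (B), at t
  have hD3 :
      (deriv (deriv x) t 0 * fderiv ℝ L (jet2 x t) (0, Pi.single 0 1, 0)
        + deriv x t 0 * deriv (fun s' => fderiv ℝ L (jet2 x s') (0, Pi.single 0 1, 0)) t
        + deriv (deriv x) t 1 * fderiv ℝ L (jet2 x t) (0, Pi.single 1 1, 0)
        + deriv x t 1 * deriv (fun s' => fderiv ℝ L (jet2 x s') (0, Pi.single 1 1, 0)) t)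
      + 2 * (deriv (deriv (deriv x)) t 0 * fderiv ℝ L (jet2 x t) (0, 0, Pi.single 0 1)
        + deriv (deriv x) t 0 * deriv (fun s' => fderiv ℝ L (jet2 x s') (0, 0, Pi.single 0 1)) t
        + deriv (deriv (deriv x)) t 1 * fderiv ℝ L (jet2 x t) (0, 0, Pi.single 1 1)
        + deriv (deriv x) t 1 * deriv (fun s' => fderiv ℝ L (jet2 x s') (0, 0, Pi.single 1 1)) t)
      = -(deriv N t) := by
    have h1 := (((hucd t 0).mul (hbd 0 t)).add ((hucd t 1).mul (hbd 1 t))).add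
      ((((hvcd t 0).mul (hcd 0 t)).add ((hvcd t 1).mul (hcd 1 t))).const_mul 2)
    have h2 : (fun s => (deriv x s 0 * fderiv ℝ L (jet2 x s) (0, Pi.single 0 1, 0)
          + deriv x s 1 * fderiv ℝ L (jet2 x s) (0, Pi.single 1 1, 0))
        + 2 * (deriv (deriv x) s 0 * fderiv ℝ L (jet2 x s) (0, 0, Pi.single 0 1)
          + deriv (deriv x) s 1 * fderiv ℝ L (jet2 x s) (0, 0, Pi.single 1 1)))
        = fun s => -(N s) := funext hIB'
    have h1 := h1.congr_of_eventuallyEq (Filter.EventuallyEq.of_eq h2.symm)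
    have hNd : HasDerivAt (fun s => -(N s)) (-(deriv N t)) t :=
      ((hN.differentiable hone t).hasDerivAt).neg
    have h3 := h1.unique hNd
    linarith [h3]
  -- chain rule for L ∘ jet2
  have hjd : HasDerivAt (jet2 x)
      (deriv x t, deriv (deriv x) t, deriv (deriv (deriv x)) t) t :=
    (hxd t).prodMk ((hud t).prodMk (hvd t))
  have hchain : HasDerivAt (fun s => L (jet2 x s))
      (fderiv ℝ L (jet2 x t) (deriv x t, deriv (deriv x) t, deriv (deriv (deriv x)) t)) t := by
    have hF := ((hL t).differentiableAt hone).hasFDerivAt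
    exact hF.comp_hasDerivAt t hjd
  have hD2 : deriv (fun s => L (jet2 x s)) t
      = deriv x t 0 * fderiv ℝ L (jet2 x t) (Pi.single 0 1, 0, 0)
        + deriv x t 1 * fderiv ℝ L (jet2 x t) (Pi.single 1 1, 0, 0)
        + (deriv (deriv x) t 0 * fderiv ℝ L (jet2 x t) (0, Pi.single 0 1, 0)
          + deriv (deriv x) t 1 * fderiv ℝ L (jet2 x t) (0, Pi.single 1 1, 0))
        + (deriv (deriv (deriv x)) t 0 * fderiv ℝ L (jet2 x t) (0, 0, Pi.single 0 1)
          + deriv (deriv (deriv x)) t 1 * fderiv ℝ L (jet2 x t) (0, 0, Pi.single 1 1)) := by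
    have h := hchain.deriv
    rw [clm_split, clm_fst, clm_mid, clm_last] at h
    linarith [h]
  have hD1 : deriv (fun s => L (jet2 x s) + N s) t
      = deriv (fun s => L (jet2 x s)) t + deriv N t := by
    exact deriv_add hchain.differentiableAt (hN.differentiable hone t)
  simp only [eulerPoisson]
  rw [hD1, hD2]
  linear_combination hD3 - hQ2

end Stmt11Aux
open scoped ContDiff

/-- on `(ℝ², g)` the extremals of the Lagrangian
`L = k − m‖u‖` (with `k` the signed Frenet curvature) are geodesic circles, i.e. the
Frenet curvature is constant along every smooth solution curve, with nonvanishing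
velocity, of the Euler–Poisson equation of `L`. -/
theorem stmt_11 (g ginv : (Fin 2 → ℝ) → Fin 2 → Fin 2 → ℝ)
    (hg : ∀ i j, ContDiff ℝ (⊤ : ℕ∞) (fun x => g x i j))
    (hsymm : ∀ x i j, g x i j = g x j i)
    (hpos : ∀ (x u : Fin 2 → ℝ), u ≠ 0 → 0 < ∑ i, ∑ j, g x i j * u i * u j)
    (hinv : ∀ x i j, ∑ k, ginv x i k * g x k j = if i = j then (1 : ℝ) else 0)
    (m : ℝ)
    (x : ℝ → Fin 2 → ℝ) (hx : ContDiff ℝ (⊤ : ℕ∞) x) (hu : ∀ t : ℝ, deriv x t ≠ 0)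
    (hEP : ∀ (l : Fin 2) (t : ℝ),
      eulerPoisson
        (fun q => frenetK g ginv q - m * gnorm g q.1 q.2.1) x l t = 0) :
    ∀ t s : ℝ, frenetK g ginv (jet2 x t) = frenetK g ginv (jet2 x s) := by
  have hone : (∞ : WithTop ℕ∞) ≠ 0 := by simp
  have hx1 : ContDiff ℝ ∞ x := hx.of_le (by simp)
  have hu1 : ContDiff ℝ ∞ (deriv x) := (contDiff_infty_iff_deriv.mp hx1).2
  have hv1 : ContDiff ℝ ∞ (deriv (deriv x)) := (contDiff_infty_iff_deriv.mp hu1).2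
  have hjet : ContDiff ℝ ∞ (jet2 x) := by
    have h : jet2 x = fun s => (x s, deriv x s, deriv (deriv x) s) := rfl
    rw [h]; exact hx1.prodMk (hu1.prodMk hv1)
  have hLq : ∀ s : ℝ, ContDiffAt ℝ ∞
      (fun q : Stmt11Aux.J2 => frenetK g ginv q - m * gnorm g q.1 q.2.1) (jet2 x s) :=
    fun s => Stmt11Aux.L_contDiffAt hg hsymm hpos hinv m (q := jet2 x s) (hu s)
  have hN : ContDiff ℝ ∞ (fun s => m * gnorm g (x s) (deriv x s)) := by
    rw [contDiff_iff_contDiffAt]; intro s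
    exact contDiffAt_const.mul
      ((Stmt11Aux.gnorm_contDiffAt hg hpos (q := jet2 x s) (hu s)).comp s hjet.contDiffAt)
  have hIAc : ∀ s : ℝ, fderiv ℝ
      (fun q : Stmt11Aux.J2 => frenetK g ginv q - m * gnorm g q.1 q.2.1)
      (jet2 x s) (0, 0, deriv x s) = 0 :=
    fun s => Stmt11Aux.identA hg hsymm hpos hinv m (q := jet2 x s) (hu s)
  have hIBc : ∀ s : ℝ, fderiv ℝ
      (fun q : Stmt11Aux.J2 => frenetK g ginv q - m * gnorm g q.1 q.2.1)
      (jet2 x s) (0, deriv x s, (2 : ℝ) • deriv (deriv x) s)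
      = -(m * gnorm g (x s) (deriv x s)) :=
    fun s => Stmt11Aux.identB hg hsymm hpos hinv m (q := jet2 x s) (hu s)
  have hkey := fun t : ℝ => Stmt11Aux.key
    (fun q : Stmt11Aux.J2 => frenetK g ginv q - m * gnorm g q.1 q.2.1) x
    (fun s => m * gnorm g (x s) (deriv x s)) t hLq hx1 hN hIAc hIBc
  have hfun : (fun s => (fun q : Stmt11Aux.J2 => frenetK g ginv q - m * gnorm g q.1 q.2.1)
        (jet2 x s) + m * gnorm g (x s) (deriv x s))
      = fun s => frenetK g ginv (jet2 x s) := by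
    funext s; simp only [jet2]; ring
  have hLjC : ContDiff ℝ ∞ (fun s =>
      (fun q : Stmt11Aux.J2 => frenetK g ginv q - m * gnorm g q.1 q.2.1) (jet2 x s)) := by
    rw [contDiff_iff_contDiffAt]; intro s
    exact (hLq s).comp s hjet.contDiffAt
  have hderiv : ∀ t : ℝ, deriv (fun s => frenetK g ginv (jet2 x s)) t = 0 := by
    intro t
    rw [← hfun, hkey t, hEP 0 t, hEP 1 t]
    ring
  have hdiff : Differentiable ℝ (fun s => frenetK g ginv (jet2 x s)) := by
    rw [← hfun]
    exact (hLjC.differentiable hone).add (hN.differentiable hone)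
  intro t s
  exact is_const_of_deriv_eq_zero hdiff hderiv t s
end
end
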